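/- arXiv:0806.2425 — 4 statements merged into one kernel-verified Lean document; each statement's English description precedes it below -/
import Mathlib

section
/- There is a finite constant C such that for all real n > 10, the sum ∑_{j=1}^{log* n} (log^{(j-1)} n)^{-1/2} is at most C; in particular sup_{n>10} ∑_{j=1}^{log* n} (log^{(j-1)} n)^{-1/2} < ∞. -/
/-- Iterated base-2 logarithm: `iterLog 0 l = l`, `iterLog (j+1) l = log₂ (iterLog j l)`. -/
noncomputable def iterLog : ℕ → ℝ → ℝ
  | 0, l => l
  | j + 1, l => Real.logb 2 (iterLog j l)

/-- `log* l`: the least `j > 0` such that `log^{(j)} l` is well defined and at most `10`. -/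
noncomputable def logStar (l : ℝ) : ℕ :=
  sInf {j : ℕ | 0 < j ∧ (∀ i < j, 0 < iterLog i l) ∧ iterLog j l ≤ 10}

lemma iterLog_succ' (j : ℕ) (x : ℝ) : iterLog (j + 1) x = iterLog j (Real.logb 2 x) := by
  induction j with
  | zero => rfl
  | succ j ih => show Real.logb 2 (iterLog (j+1) x) = _; rw [ih]; rfl

/-- `log₂ x ≤ (3/4) x` for positive `x`. -/
lemma logb_le (x : ℝ) (hx : 0 < x) : Real.logb 2 x ≤ (3/4) * x := by
  have hv : (0:ℝ) < Real.sqrt x := Real.sqrt_pos.mpr hx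
  have h1 : Real.log (Real.sqrt x) ≤ Real.sqrt x - 1 := Real.log_le_sub_one_of_pos hv
  have hs : Real.log (Real.sqrt x) = Real.log x / 2 := Real.log_sqrt hx.le
  have h2 : (0.6931471803 : ℝ) < Real.log 2 := Real.log_two_gt_d9
  have hsq : Real.sqrt x ^ 2 = x := Real.sq_sqrt hx.le
  rw [Real.logb, div_le_iff₀ (by positivity)]
  nlinarith [sq_nonneg (Real.sqrt x - 2)]

/-- the decay ratio -/
noncomputable def rr : ℝ := (3/4 : ℝ) ^ ((1:ℝ)/2)

lemma rr_nonneg : 0 ≤ rr := Real.rpow_nonneg (by norm_num) _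

lemma rr_sq : rr * rr = 3/4 := by
  rw [rr, ← Real.rpow_add (by norm_num)]
  norm_num

lemma rr_le : rr ≤ 8/9 := by
  nlinarith [rr_sq, rr_nonneg]

/-- decay step -/
lemma decay (x : ℝ) (hx : 10 < x) :
    x ^ (-(1/2) : ℝ) ≤ rr * (Real.logb 2 x) ^ (-(1/2) : ℝ) := by
  have hy : 0 < Real.logb 2 x := Real.logb_pos one_lt_two (by linarith)
  have hle : Real.logb 2 x ≤ (3/4) * x := logb_le x (by linarith)
  have h1 : ((3/4 : ℝ) * x) ^ (-(1/2) : ℝ) ≤ (Real.logb 2 x) ^ (-(1/2) : ℝ) :=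
    Real.rpow_le_rpow_of_nonpos hy hle (by norm_num)
  have h2 : ((3/4 : ℝ) * x) ^ (-(1/2) : ℝ)
      = (3/4 : ℝ) ^ (-(1/2) : ℝ) * x ^ (-(1/2) : ℝ) :=
    Real.mul_rpow (by norm_num) (by linarith)
  have h3 : rr * (3/4 : ℝ) ^ (-(1/2) : ℝ) = 1 := by
    rw [rr, ← Real.rpow_add (by norm_num)]
    norm_num
  calc x ^ (-(1/2) : ℝ) = rr * ((3/4 : ℝ) ^ (-(1/2) : ℝ) * x ^ (-(1/2) : ℝ)) := by
        rw [← mul_assoc, h3, one_mul]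
    _ = rr * ((3/4 : ℝ) * x) ^ (-(1/2) : ℝ) := by rw [h2]
    _ ≤ rr * (Real.logb 2 x) ^ (-(1/2) : ℝ) := by
        exact mul_le_mul_of_nonneg_left h1 rr_nonneg

/-- the defining set of `logStar` is nonempty -/
lemma logStar_set_nonempty : ∀ (N : ℕ) (x : ℝ), 10 < x → x ≤ N →
    ∃ j, 0 < j ∧ (∀ i < j, 0 < iterLog i x) ∧ iterLog j x ≤ 10 := by
  intro N
  induction N using Nat.strong_induction_on with
  | _ N ih =>
    intro x hx hxN
    by_cases h : Real.logb 2 x ≤ 10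
    · refine ⟨1, one_pos, ?_, by simpa [iterLog] using h⟩
      intro i hi
      interval_cases i
      simpa [iterLog] using (by linarith : (0:ℝ) < x)
    · push_neg at h
      have hN : (11:ℕ) ≤ N := by
        have h10 : (10:ℝ) < N := lt_of_lt_of_le hx hxN
        have : (10:ℕ) < N := by exact_mod_cast h10
        omega
      have hlog : Real.logb 2 x ≤ (3/4) * x := logb_le x (by linarith)
      have hbound : Real.logb 2 x ≤ (N - 1 : ℕ) := by
        have : ((N:ℝ) - 1) ≥ (3/4) * N := by
          have : (4:ℝ) ≤ N := by exact_mod_cast le_trans (by norm_num) hN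
          linarith
        push_cast [Nat.cast_sub (by omega : 1 ≤ N)]
        nlinarith
      obtain ⟨j, hj0, hjpos, hj10⟩ := ih (N - 1) (by omega) (Real.logb 2 x) h hbound
      refine ⟨j + 1, Nat.succ_pos _, ?_, by rw [iterLog_succ']; exact hj10⟩
      intro i hi
      match i with
      | 0 => simpa [iterLog] using (by linarith : (0:ℝ) < x)
      | i + 1 =>
        rw [iterLog_succ']
        exact hjpos i (by omega)

/-- There is a finite constant `C` such that for all real `n > 10`,
`∑_{j=1}^{log* n} (log^{(j-1)} n)^{-1/2} ≤ C`. -/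
theorem sum_iterLog_rpow_neg_half_bounded :
    ∃ C : ℝ, ∀ n : ℝ, 10 < n →
      ∑ j ∈ Finset.Icc 1 (logStar n), (iterLog (j - 1) n) ^ (-(1/2) : ℝ) ≤ C := by
  refine ⟨3, fun n hn => ?_⟩
  set L := logStar n with hLdef
  have hne : {j : ℕ | 0 < j ∧ (∀ i < j, 0 < iterLog i n) ∧ iterLog j n ≤ 10}.Nonempty := by
    obtain ⟨j, h⟩ := logStar_set_nonempty ⌈n⌉₊ n hn (Nat.le_ceil n)
    exact ⟨j, h⟩
  have hmem := Nat.sInf_mem hne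
  obtain ⟨hL0, hLpos, hL10⟩ := hmem
  -- all earlier iterates exceed 10
  have hgt : ∀ i < L, 10 < iterLog i n := by
    intro i
    induction i using Nat.strong_induction_on with
    | _ i ih =>
      intro hiL
      match i with
      | 0 => simpa [iterLog] using hn
      | i + 1 =>
        by_contra hle
        push_neg at hle
        have : L ≤ i + 1 := Nat.sInf_le ⟨Nat.succ_pos _, fun i' hi' =>
          by linarith [ih i' (by omega) (by omega)], hle⟩
        omega
  -- geometric bound on terms, counted from the top
  have claim : ∀ k, k < L → (iterLog (L - 1 - k) n) ^ (-(1/2) : ℝ) ≤ (1/3) * rr ^ k := by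
    intro k
    induction k with
    | zero =>
      intro hk
      have h10 : 10 < iterLog (L - 1) n := hgt (L - 1) (by omega)
      have h9 : (iterLog (L - 1) n) ^ (-(1/2) : ℝ) ≤ (9:ℝ) ^ (-(1/2) : ℝ) :=
        Real.rpow_le_rpow_of_nonpos (by norm_num) (by linarith) (by norm_num)
      have h93 : (9:ℝ) ^ (-(1/2) : ℝ) = 1/3 := by
        rw [show (9:ℝ) = 3 ^ (2:ℕ) by norm_num, ← Real.rpow_natCast (3:ℝ) 2,
          ← Real.rpow_mul (by norm_num : (0:ℝ) ≤ 3)]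
        norm_num [Real.rpow_neg_one]
      rw [h93] at h9
      simpa using h9
    | succ k ihk =>
      intro hk
      have hkL : k < L := by omega
      have hidx : L - 1 - k = (L - 1 - (k + 1)) + 1 := by omega
      have h10 : 10 < iterLog (L - 1 - (k + 1)) n := hgt _ (by omega)
      have hstep : (iterLog (L - 1 - (k + 1)) n) ^ (-(1/2) : ℝ)
          ≤ rr * (iterLog (L - 1 - k) n) ^ (-(1/2) : ℝ) := by
        have := decay (iterLog (L - 1 - (k + 1)) n) h10
        rw [hidx]
        simpa [iterLog] using this
      calc (iterLog (L - 1 - (k + 1)) n) ^ (-(1/2) : ℝ)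
          ≤ rr * (iterLog (L - 1 - k) n) ^ (-(1/2) : ℝ) := hstep
        _ ≤ rr * ((1/3) * rr ^ k) := mul_le_mul_of_nonneg_left (ihk hkL) rr_nonneg
        _ = (1/3) * rr ^ (k + 1) := by ring
  -- reindex the sum
  have hre : ∑ j ∈ Finset.Icc 1 L, (iterLog (j - 1) n) ^ (-(1/2) : ℝ)
      = ∑ i ∈ Finset.range L, (iterLog i n) ^ (-(1/2) : ℝ) := by
    rw [show Finset.Icc 1 L = Finset.Ico 1 (L+1) by rw [Finset.Ico_add_one_right_eq_Icc],
      Finset.sum_Ico_eq_sum_range]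
    simp
  rw [hre]
  have hterm : ∀ i ∈ Finset.range L, (iterLog i n) ^ (-(1/2) : ℝ) ≤ (1/3) * rr ^ (L - 1 - i) := by
    intro i hi
    rw [Finset.mem_range] at hi
    have hkey := claim (L - 1 - i) (by omega)
    rwa [show L - 1 - (L - 1 - i) = i by omega] at hkey
  calc ∑ i ∈ Finset.range L, (iterLog i n) ^ (-(1/2) : ℝ)
      ≤ ∑ i ∈ Finset.range L, (1/3) * rr ^ (L - 1 - i) := Finset.sum_le_sum hterm
    _ = ∑ i ∈ Finset.range L, (1/3) * rr ^ i := Finset.sum_range_reflect (fun k => 1/3 * rr ^ k) L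
    _ = (1/3) * ∑ i ∈ Finset.range L, rr ^ i := by rw [Finset.mul_sum]
    _ ≤ 3 := by
        have hr1 : rr < 1 := lt_of_le_of_lt rr_le (by norm_num)
        have hsum : ∑ i ∈ Finset.range L, rr ^ i ≤ 9 := by
          have := geom_sum_eq (ne_of_lt hr1) L
          rw [this]
          have hpow : 0 ≤ rr ^ L := pow_nonneg rr_nonneg L
          rw [div_le_iff_of_neg (by linarith : rr - 1 < 0)]
          nlinarith [rr_le]
        linarith
end

section
/- (Borel's extension of the Borel–Cantelli lemma.) Let (Ω, F, P) be a probability space and (Γ_n) a sequence of events with indicators a_n = 1_{Γ_n}. Suppose there is a sequence of reals b_n > 0 with ∑_n b_n = ∞ such that for every n and every choice α_1,…,α_{n-1} ∈ {0,1} with P(a_1 = α_1, …, a_{n-1} = α_{n-1}) > 0 one has P(Γ_n | a_1 = α_1, …, a_{n-1} = α_{n-1}) ≥ b_n. Then P(limsup_n Γ_n) = 1, i.e., almost surely infinitely many Γ_n occur. -/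
open MeasureTheory Filter

/-- Borel's extension of the Borel–Cantelli lemma: if `(Γ n)` is a sequence of events on a
probability space and `(b n)` are positive reals with `∑ b n = ∞` such that, conditionally on
any configuration of the indicators of `Γ 0, …, Γ (n-1)` having positive probability, the
conditional probability of `Γ n` is at least `b n`, then almost surely infinitely many `Γ n`
occur. -/
theorem borel_extension_borel_cantelli
    {Ω : Type*} [MeasurableSpace Ω] (μ : Measure Ω) [IsProbabilityMeasure μ]
    (Γ : ℕ → Set Ω) (hΓ : ∀ n, MeasurableSet (Γ n))
    (b : ℕ → ℝ) (hb : ∀ n, 0 < b n)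
    (hdiv : ¬ Summable b)
    (hcond : ∀ (n : ℕ) (α : ℕ → Bool),
      μ (⋂ i ∈ Finset.range n, (if α i then Γ i else (Γ i)ᶜ)) ≠ 0 →
      ENNReal.ofReal (b n) ≤
        ProbabilityTheory.cond μ
          (⋂ i ∈ Finset.range n, (if α i then Γ i else (Γ i)ᶜ)) (Γ n)) :
    μ (Filter.limsup Γ Filter.atTop) = 1 := by
  classical
  set A : ℕ → (ℕ → Bool) → Set Ω :=
    fun m α => ⋂ i ∈ Finset.range m, (if α i then Γ i else (Γ i)ᶜ) with hA
  have hAmeas : ∀ m α, MeasurableSet (A m α) := by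
    intro m α
    refine Finset.measurableSet_biInter _ (fun i _ => ?_)
    cases hαi : α i <;> simp [hαi] <;> exact hΓ i
  -- key step: conditional bound on each atom
  have key : ∀ (m : ℕ) (α : ℕ → Bool),
      μ (A m α ∩ (Γ m)ᶜ) ≤ (1 - ENNReal.ofReal (b m)) * μ (A m α) := by
    intro m α
    by_cases hs0 : μ (A m α) = 0
    · have : μ (A m α ∩ (Γ m)ᶜ) = 0 :=
        measure_mono_null Set.inter_subset_left hs0
      simp [this]
    · have hstop : μ (A m α) ≠ ⊤ := measure_ne_top μ _
      have hc := hcond m α hs0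
      rw [ProbabilityTheory.cond_apply (hAmeas m α) μ (Γ m)] at hc
      set r := ENNReal.ofReal (b m) with hr
      have hmul : r * μ (A m α) ≤ μ (A m α ∩ Γ m) := by
        calc r * μ (A m α) ≤ ((μ (A m α))⁻¹ * μ (A m α ∩ Γ m)) * μ (A m α) :=
              mul_le_mul_left hc _
          _ = (μ (A m α) * (μ (A m α))⁻¹) * μ (A m α ∩ Γ m) := by ring
          _ = μ (A m α ∩ Γ m) := by
              rw [ENNReal.mul_inv_cancel hs0 hstop, one_mul]
      have heq : μ (A m α ∩ Γ m) + μ (A m α ∩ (Γ m)ᶜ) = μ (A m α) := by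
        have := measure_inter_add_diff (μ := μ) (A m α) (hΓ m)
        rwa [Set.diff_eq] at this
      have hr1 : r ≤ 1 := by
        by_contra hgt
        push_neg at hgt
        have h1 : μ (A m α) < r * μ (A m α) := by
          calc μ (A m α) = 1 * μ (A m α) := (one_mul _).symm
            _ < r * μ (A m α) := by
                exact ENNReal.mul_lt_mul_left hs0 hstop hgt
        have h2 : r * μ (A m α) ≤ μ (A m α) :=
          hmul.trans (measure_mono Set.inter_subset_left)
        exact absurd h2 (not_le.mpr h1)
      have hfin : r * μ (A m α) ≠ ⊤ :=
        ENNReal.mul_ne_top ENNReal.ofReal_ne_top hstop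
      rw [← ENNReal.add_le_add_iff_right hfin]
      calc μ (A m α ∩ (Γ m)ᶜ) + r * μ (A m α)
          ≤ μ (A m α ∩ (Γ m)ᶜ) + μ (A m α ∩ Γ m) := add_le_add_right hmul _
        _ = μ (A m α) := by rw [add_comm]; exact heq
        _ = ((1 - r) + r) * μ (A m α) := by
            rw [tsub_add_cancel_of_le hr1, one_mul]
        _ = (1 - r) * μ (A m α) + r * μ (A m α) := by rw [add_mul]
  -- extension of a finite configuration
  set ext : ∀ n : ℕ, (Fin n → Bool) → (ℕ → Bool) :=
    fun n α i => if h : i < n then α ⟨i, h⟩ else false with hext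
  -- decomposition of the tail intersection
  have hdecomp : ∀ n m : ℕ, n ≤ m →
      (⋂ k ∈ Finset.Ico n m, (Γ k)ᶜ) = ⋃ α : Fin n → Bool, A m (ext n α) := by
    intro n m hnm
    ext ω
    simp only [Set.mem_iInter, Set.mem_iUnion, hA, Finset.mem_Ico, Finset.mem_range]
    constructor
    · intro hω
      refine ⟨fun i => decide (ω ∈ Γ i), ?_⟩
      intro i hi
      by_cases hin : (i : ℕ) < n
      · simp only [hext, hin, dif_pos]
        by_cases hmem : ω ∈ Γ i
        · simp [hmem]
        · simp [hmem]
      · have : ext n (fun j => decide (ω ∈ Γ j)) i = false := by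
          simp [hext, hin]
        rw [this]
        simpa using hω i ⟨le_of_not_gt hin, hi⟩
    · rintro ⟨α, hα⟩ k ⟨hnk, hkm⟩
      have := hα k hkm
      have hfk : ext n α k = false := by simp [hext, Nat.not_lt.mpr hnk]
      rw [hfk] at this
      simpa using this
  -- disjointness of atoms
  have hdisj : ∀ n m : ℕ, n ≤ m →
      Pairwise (Function.onFun Disjoint (fun α : Fin n → Bool => A m (ext n α))) := by
    intro n m hnm α β hne
    obtain ⟨i, hi⟩ : ∃ i, α i ≠ β i := by
      by_contra h; push_neg at h; exact hne (funext h)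
    have him : (i : ℕ) ∈ Finset.range m := Finset.mem_range.mpr (lt_of_lt_of_le i.2 hnm)
    have hsub : ∀ γ : Fin n → Bool,
        A m (ext n γ) ⊆ (if γ i then Γ i else (Γ i)ᶜ) := by
      intro γ
      have : A m (ext n γ) ⊆ (if ext n γ i then Γ i else (Γ i)ᶜ) :=
        Set.biInter_subset_of_mem him
      have hε : ext n γ (i : ℕ) = γ i := by simp [hext, i.2]
      rwa [hε] at this
    refine Set.disjoint_left.mpr fun ω hωα hωβ => ?_
    have h1 := hsub α hωα
    have h2 := hsub β hωβ
    cases hαi : α i <;> cases hβi : β i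
    · exact hi (hαi.trans hβi.symm)
    · rw [hαi] at h1; rw [hβi] at h2; simp at h1 h2; exact h1 h2
    · rw [hαi] at h1; rw [hβi] at h2; simp at h1 h2; exact h2 h1
    · exact hi (hαi.trans hβi.symm)
  -- one-step inequality
  have hstep : ∀ n m : ℕ, n ≤ m →
      μ (⋂ k ∈ Finset.Ico n (m + 1), (Γ k)ᶜ) ≤
        (1 - ENNReal.ofReal (b m)) * μ (⋂ k ∈ Finset.Ico n m, (Γ k)ᶜ) := by
    intro n m hnm
    have hsplit : (⋂ k ∈ Finset.Ico n (m + 1), (Γ k)ᶜ) =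
        (⋂ k ∈ Finset.Ico n m, (Γ k)ᶜ) ∩ (Γ m)ᶜ := by
      rw [Finset.Ico_add_one_right_eq_Icc, ← Finset.Ico_insert_right hnm, Finset.set_biInter_insert]
      rw [Set.inter_comm]
    rw [hsplit, hdecomp n m hnm, Set.iUnion_inter]
    calc μ (⋃ α : Fin n → Bool, A m (ext n α) ∩ (Γ m)ᶜ)
        ≤ ∑ α : Fin n → Bool, μ (A m (ext n α) ∩ (Γ m)ᶜ) := measure_iUnion_fintype_le _ _
      _ ≤ ∑ α : Fin n → Bool, (1 - ENNReal.ofReal (b m)) * μ (A m (ext n α)) :=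
          Finset.sum_le_sum fun α _ => key m (ext n α)
      _ = (1 - ENNReal.ofReal (b m)) * ∑ α : Fin n → Bool, μ (A m (ext n α)) := by
          rw [Finset.mul_sum]
      _ = (1 - ENNReal.ofReal (b m)) * μ (⋃ α : Fin n → Bool, A m (ext n α)) := by
          rw [measure_iUnion (hdisj n m hnm) (fun α => hAmeas m (ext n α)), tsum_fintype]
  -- product bound by induction
  have hprod : ∀ n m : ℕ, n ≤ m →
      μ (⋂ k ∈ Finset.Ico n m, (Γ k)ᶜ) ≤
        ∏ k ∈ Finset.Ico n m, (1 - ENNReal.ofReal (b k)) := by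
    intro n m hnm
    induction m, hnm using Nat.le_induction with
    | base => simp
    | succ m hnm ih =>
        calc μ (⋂ k ∈ Finset.Ico n (m + 1), (Γ k)ᶜ)
            ≤ (1 - ENNReal.ofReal (b m)) * μ (⋂ k ∈ Finset.Ico n m, (Γ k)ᶜ) :=
              hstep n m hnm
          _ ≤ (1 - ENNReal.ofReal (b m)) * ∏ k ∈ Finset.Ico n m, (1 - ENNReal.ofReal (b k)) :=
              mul_le_mul_right ih _
          _ = ∏ k ∈ Finset.Ico n (m + 1), (1 - ENNReal.ofReal (b k)) := by
              rw [Finset.prod_Ico_succ_top hnm, mul_comm]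
  -- exponential bound on the product
  have hexp : ∀ n m : ℕ,
      (∏ k ∈ Finset.Ico n m, (1 - ENNReal.ofReal (b k))) ≤
        ENNReal.ofReal (Real.exp (-(∑ k ∈ Finset.Ico n m, b k))) := by
    intro n m
    calc (∏ k ∈ Finset.Ico n m, (1 - ENNReal.ofReal (b k)))
        ≤ ∏ k ∈ Finset.Ico n m, ENNReal.ofReal (Real.exp (-(b k))) := by
          refine Finset.prod_le_prod' fun k _ => ?_
          have h1 : 1 - b k ≤ Real.exp (-(b k)) := by
            have := Real.add_one_le_exp (-(b k)); linarith
          by_cases hk : b k ≤ 1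
          · rw [show (1 : ENNReal) = ENNReal.ofReal 1 by simp, ← ENNReal.ofReal_sub _ (le_of_lt (hb k))]
            exact ENNReal.ofReal_le_ofReal h1
          · have : ENNReal.ofReal 1 ≤ ENNReal.ofReal (b k) :=
              ENNReal.ofReal_le_ofReal (le_of_not_ge hk)
            simp only [ENNReal.ofReal_one] at this
            rw [tsub_eq_zero_of_le this]
            exact zero_le
      _ = ENNReal.ofReal (∏ k ∈ Finset.Ico n m, Real.exp (-(b k))) :=
          (ENNReal.ofReal_prod_of_nonneg fun k _ => (Real.exp_pos _).le).symm
      _ = ENNReal.ofReal (Real.exp (-(∑ k ∈ Finset.Ico n m, b k))) := by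
          rw [← Real.exp_sum, Finset.sum_neg_distrib]
  -- divergence of partial sums
  have hsum : Tendsto (fun m => ∑ k ∈ Finset.range m, b k) atTop atTop := by
    have := (not_summable_iff_tendsto_nat_atTop_of_nonneg (fun k => (hb k).le)).mp hdiv
    exact this
  -- tail events have measure zero
  have htail : ∀ n : ℕ, μ (⋂ k, ⋂ (_ : n ≤ k), (Γ k)ᶜ) = 0 := by
    intro n
    have hbound : ∀ᶠ m in atTop, μ (⋂ k, ⋂ (_ : n ≤ k), (Γ k)ᶜ) ≤
        ENNReal.ofReal (Real.exp (-(∑ k ∈ Finset.range m, b k - ∑ k ∈ Finset.range n, b k))) := by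
      filter_upwards [eventually_ge_atTop n] with m hnm
      have hsub : (⋂ k, ⋂ (_ : n ≤ k), (Γ k)ᶜ) ⊆ ⋂ k ∈ Finset.Ico n m, (Γ k)ᶜ := by
        intro ω hω
        simp only [Set.mem_iInter, Finset.mem_Ico] at hω ⊢
        exact fun k hk => hω k hk.1
      have hIco : ∑ k ∈ Finset.Ico n m, b k =
          ∑ k ∈ Finset.range m, b k - ∑ k ∈ Finset.range n, b k :=
        Finset.sum_Ico_eq_sub b hnm
      calc μ (⋂ k, ⋂ (_ : n ≤ k), (Γ k)ᶜ) ≤ μ (⋂ k ∈ Finset.Ico n m, (Γ k)ᶜ) :=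
            measure_mono hsub
        _ ≤ ∏ k ∈ Finset.Ico n m, (1 - ENNReal.ofReal (b k)) := hprod n m hnm
        _ ≤ ENNReal.ofReal (Real.exp (-(∑ k ∈ Finset.Ico n m, b k))) := hexp n m
        _ = _ := by rw [hIco]
    have hlim : Tendsto (fun m =>
        ENNReal.ofReal (Real.exp (-(∑ k ∈ Finset.range m, b k - ∑ k ∈ Finset.range n, b k))))
        atTop (nhds 0) := by
      have h1 : Tendsto (fun m => ∑ k ∈ Finset.range m, b k - ∑ k ∈ Finset.range n, b k)
          atTop atTop := tendsto_atTop_add_const_right _ _ hsum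
      have h2 : Tendsto (fun m =>
          Real.exp (-(∑ k ∈ Finset.range m, b k - ∑ k ∈ Finset.range n, b k))) atTop (nhds 0) :=
        Real.tendsto_exp_neg_atTop_nhds_zero.comp h1
      have := (ENNReal.continuous_ofReal.tendsto 0).comp h2
      simpa [Function.comp_def] using this
    have := ge_of_tendsto hlim hbound
    exact le_antisymm this zero_le
  -- conclude
  have hcompl : μ (Filter.limsup Γ Filter.atTop)ᶜ = 0 := by
    have hls : Filter.limsup Γ Filter.atTop = ⨅ n : ℕ, ⨆ k, ⨆ (_ : n ≤ k), Γ k :=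
      limsup_eq_iInf_iSup_of_nat
    rw [hls]
    simp only [Set.iInf_eq_iInter, Set.iSup_eq_iUnion, Set.compl_iInter, Set.compl_iUnion]
    exact measure_iUnion_null fun n => htail n
  have h1 : (1 : ENNReal) ≤ μ (Filter.limsup Γ Filter.atTop) := by
    have : μ Set.univ ≤ μ (Filter.limsup Γ Filter.atTop) + μ (Filter.limsup Γ Filter.atTop)ᶜ := by
      rw [← Set.union_compl_self (Filter.limsup Γ Filter.atTop)]
      exact measure_union_le _ _
    rwa [measure_univ, hcompl, add_zero] at this
  exact le_antisymm prob_le_one h1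
end

section
/- (Russo-formula lower bound, Section 4.) Let Γ be an increasing event in Bernoulli bond percolation on a finite edge set depending on the edges of B(2n) ⊂ ℤ², and suppose that on Γ, for every vertex v ∈ B(n), at least one of the (at most 4) edges incident to v is pivotal for Γ (as holds for Γ = {B(n) is contained in the open cluster of 0 inside B(2n)}). Then for p ∈ [ε, 1-ε], d/dp P_p(Γ) ≥ C(ε) n² P_p(Γ) for a constant C(ε) > 0 depending only on ε. Consequently, for p_c ≤ p, P_p(Γ) ≥ P_{p_c}(Γ) · exp(C(ε) n² (p - p_c)). -/
open MeasureTheory Finset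

/-- The Bernoulli(`p`) measure on `Bool` (for `p` outside `[0,1]` the parameter is
truncated, which is irrelevant for the statement below). -/
noncomputable def bernoulliBool (p : ℝ) : Measure Bool :=
  (PMF.bernoulli (min (Real.toNNReal p) 1) (min_le_right _ _)).toMeasure

instance (p : ℝ) : IsProbabilityMeasure (bernoulliBool p) :=
  PMF.toMeasure.isProbabilityMeasure _

/-- The Bernoulli(`p`) product (bond percolation) measure on configurations `ι → Bool`. -/
noncomputable def bernoulliConfig (ι : Type) [Fintype ι] (p : ℝ) : Measure (ι → Bool) :=
  Measure.pi fun _ => bernoulliBool p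

/-- An edge `e` is pivotal for the event `Γ` in the configuration `ω`. -/
def Pivotal {ι : Type} [DecidableEq ι] (Γ : Set (ι → Bool)) (e : ι) (ω : ι → Bool) : Prop :=
  Function.update ω e true ∈ Γ ∧ Function.update ω e false ∉ Γ

/-- weight of a single edge state -/
def wgt (p : ℝ) (b : Bool) : ℝ := bif b then p else 1 - p

lemma wgt_nonneg {p : ℝ} (h0 : 0 ≤ p) (h1 : p ≤ 1) (b : Bool) : 0 ≤ wgt p b := by
  cases b <;> simp [wgt] <;> linarith

lemma wgt_le_one {p : ℝ} (h0 : 0 ≤ p) (h1 : p ≤ 1) (b : Bool) : wgt p b ≤ 1 := by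
  cases b <;> simp [wgt] <;> linarith

lemma bernoulliBool_toReal {p : ℝ} (hp0 : 0 ≤ p) (hp1 : p ≤ 1) (b : Bool) :
    (bernoulliBool p {b}).toReal = wgt p b := by
  rw [bernoulliBool, PMF.toMeasure_apply_singleton _ b (measurableSet_singleton b)]
  have h1 : min (Real.toNNReal p) 1 = Real.toNNReal p :=
    min_eq_left (Real.toNNReal_le_one.mpr hp1)
  rw [PMF.bernoulli_apply, h1]
  cases b with
  | true => simp [wgt, Real.coe_toNNReal _ hp0]
  | false =>
      simp only [wgt, Bool.cond_false, ENNReal.coe_toReal]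
      rw [NNReal.coe_sub (Real.toNNReal_le_one.mpr hp1)]
      simp [Real.coe_toNNReal _ hp0]

lemma bernoulliConfig_toReal {ι : Type} [Fintype ι] [DecidableEq ι] {p : ℝ} (hp0 : 0 ≤ p) (hp1 : p ≤ 1)
    (Γ : Set (ι → Bool)) [DecidablePred (· ∈ Γ)] :
    ((bernoulliConfig ι p) Γ).toReal
      = ∑ ω ∈ Finset.univ.filter (· ∈ Γ), ∏ e, wgt p (ω e) := by
  have hΓ : Γ = ⋃ ω ∈ Finset.univ.filter (· ∈ Γ), ({ω} : Set (ι → Bool)) := by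
    ext ω; simp
  rw [bernoulliConfig]
  conv_lhs => rw [hΓ]
  rw [measure_biUnion_finset
      (fun a _ b _ hab => Set.disjoint_singleton.mpr hab)
      (fun ω _ => measurableSet_singleton ω)]
  rw [ENNReal.toReal_sum (fun ω _ => measure_ne_top _ _)]
  refine Finset.sum_congr rfl fun ω _ => ?_
  have h1 : ({ω} : Set (ι → Bool)) = Set.pi Set.univ (fun e => {ω e}) := by
    ext ω'; simp [Set.mem_pi, funext_iff]
  rw [h1, Measure.pi_pi, ENNReal.toReal_prod]
  exact Finset.prod_congr rfl fun e _ => bernoulliBool_toReal hp0 hp1 (ω e)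

/-- sign of a bool -/
def wsgn (b : Bool) : ℝ := bif b then 1 else -1

lemma hasDerivAt_wgt (p : ℝ) (b : Bool) : HasDerivAt (fun q => wgt q b) (wsgn b) p := by
  cases b with
  | true => simpa [wgt, wsgn] using (hasDerivAt_id' p)
  | false => simpa [wgt, wsgn] using (hasDerivAt_id p).const_sub 1

lemma hasDerivAt_F {ι : Type} [Fintype ι] [DecidableEq ι] (G : Finset (ι → Bool)) (p : ℝ) :
    HasDerivAt (fun q => ∑ ω ∈ G, ∏ e, wgt q (ω e))
      (∑ ω ∈ G, ∑ e, (∏ e' ∈ univ.erase e, wgt p (ω e')) * wsgn (ω e)) p := by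
  refine HasDerivAt.fun_sum fun ω _ => ?_
  have h := HasDerivAt.fun_finsetProd (u := (univ : Finset ι))
    (f := fun e q => wgt q (ω e)) (f' := fun e => wsgn (ω e)) (x := p)
    (fun e _ => hasDerivAt_wgt p (ω e))
  simpa [smul_eq_mul] using h

lemma key_ineq {ι V : Type} [Fintype ι] [DecidableEq ι] [Fintype V]
    (inc : V → Finset ι) (Γ : Set (ι → Bool)) [DecidablePred (· ∈ Γ)]
    (hdeg : ∀ e : ι, (Finset.univ.filter fun v => e ∈ inc v).card ≤ 2)
    (hmono : ∀ ω ω' : ι → Bool, (∀ e, ω e = true → ω' e = true) → ω ∈ Γ → ω' ∈ Γ)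
    (hpiv : ∀ ω ∈ Γ, ∀ v : V, ∃ e ∈ inc v, Pivotal Γ e ω)
    {p : ℝ} (hp0 : 0 ≤ p) (hp1 : p ≤ 1) :
    (Fintype.card V : ℝ) * ∑ ω ∈ univ.filter (· ∈ Γ), ∏ e, wgt p (ω e)
      ≤ 2 * ∑ ω ∈ univ.filter (· ∈ Γ), ∑ e, (∏ e' ∈ univ.erase e, wgt p (ω e')) * wsgn (ω e) := by
  classical
  set G := univ.filter (· ∈ Γ) with hGdef
  set A : ι → (ι → Bool) → ℝ := fun e ω => ∏ e' ∈ univ.erase e, wgt p (ω e') with hA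
  set W : (ι → Bool) → ℝ := fun ω => ∏ e, wgt p (ω e) with hW
  have hAnn : ∀ e ω, 0 ≤ A e ω := fun e ω => Finset.prod_nonneg fun e' _ => wgt_nonneg hp0 hp1 _
  have hWnn : ∀ ω, 0 ≤ W ω := fun ω => Finset.prod_nonneg fun e' _ => wgt_nonneg hp0 hp1 _
  have hWA : ∀ e ω, W ω ≤ A e ω := by
    intro e ω
    calc W ω = wgt p (ω e) * A e ω :=
          (Finset.mul_prod_erase univ (fun e' => wgt p (ω e')) (Finset.mem_univ e)).symm
      _ ≤ 1 * A e ω := mul_le_mul_of_nonneg_right (wgt_le_one hp0 hp1 _) (hAnn e ω)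
      _ = A e ω := one_mul _
  have step1 : ∀ e : ι, ∑ ω ∈ G.filter (fun ω => Pivotal Γ e ω), W ω
      ≤ ∑ ω ∈ G, A e ω * wsgn (ω e) := by
    intro e
    set Gt := G.filter (fun ω => ω e = true) with hGt
    set Gf := G.filter (fun ω => ¬ ω e = true) with hGf
    set I := Gf.image (fun ω => Function.update ω e true) with hI
    have hsplit : ∑ ω ∈ G, A e ω * wsgn (ω e) = ∑ ω ∈ Gt, A e ω - ∑ ω ∈ Gf, A e ω := by
      rw [← Finset.sum_filter_add_sum_filter_not G (fun ω => ω e = true)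
        (fun ω => A e ω * wsgn (ω e))]
      have h1 : ∑ ω ∈ Gt, A e ω * wsgn (ω e) = ∑ ω ∈ Gt, A e ω := by
        refine Finset.sum_congr rfl fun ω hω => ?_
        have h : ω e = true := (Finset.mem_filter.mp hω).2
        simp [wsgn, h]
      have h2 : ∑ ω ∈ Gf, A e ω * wsgn (ω e) = -∑ ω ∈ Gf, A e ω := by
        rw [← Finset.sum_neg_distrib]
        refine Finset.sum_congr rfl fun ω hω => ?_
        have h : ω e = false := by simpa using (Finset.mem_filter.mp hω).2
        simp [wsgn, h]
      rw [h1, h2]; ring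
    have hinj : ∀ a ∈ Gf, ∀ b ∈ Gf,
        Function.update a e true = Function.update b e true → a = b := by
      intro a ha b hb hab
      have hae : a e = false := by simpa using (Finset.mem_filter.mp ha).2
      have hbe : b e = false := by simpa using (Finset.mem_filter.mp hb).2
      funext e'
      by_cases h : e' = e
      · subst h; rw [hae, hbe]
      · have := congrFun hab e'
        simpa [Function.update_of_ne h] using this
    have hIsum : ∑ ω ∈ I, A e ω = ∑ ω ∈ Gf, A e ω := by
      rw [hI, Finset.sum_image hinj]
      refine Finset.sum_congr rfl fun ω hω => ?_
      refine Finset.prod_congr rfl fun e' he' => ?_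
      rw [Function.update_of_ne (Finset.ne_of_mem_erase he')]
    have hIGt : I ⊆ Gt := by
      intro ω' hω'
      obtain ⟨ω, hω, rfl⟩ := Finset.mem_image.mp hω'
      have hωΓ : ω ∈ Γ := (Finset.mem_filter.mp ((Finset.mem_filter.mp hω).1)).2
      have hupd : Function.update ω e true ∈ Γ := by
        refine hmono ω _ (fun e' h' => ?_) hωΓ
        by_cases he : e' = e
        · subst he; simp
        · rwa [Function.update_of_ne he]
      refine Finset.mem_filter.mpr ⟨Finset.mem_filter.mpr ⟨Finset.mem_univ _, hupd⟩, ?_⟩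
      simp
    have hPsub : G.filter (fun ω => Pivotal Γ e ω) ⊆ Gt \ I := by
      intro ω hω
      obtain ⟨hωG, hpv⟩ := Finset.mem_filter.mp hω
      have hωΓ : ω ∈ Γ := (Finset.mem_filter.mp hωG).2
      have hωe : ω e = true := by
        by_contra h
        have hfe : ω e = false := by simpa using h
        have hupd : Function.update ω e false = ω := by
          funext e'
          by_cases he : e' = e
          · subst he; simp [hfe]
          · rw [Function.update_of_ne he]
        exact hpv.2 (by rw [hupd]; exact hωΓ)
      refine Finset.mem_sdiff.mpr ⟨Finset.mem_filter.mpr ⟨hωG, hωe⟩, ?_⟩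
      intro hI'
      obtain ⟨ω', hω', heq⟩ := Finset.mem_image.mp hI'
      have hω'Γ : ω' ∈ Γ := (Finset.mem_filter.mp ((Finset.mem_filter.mp hω').1)).2
      have hω'e : ω' e = false := by simpa using (Finset.mem_filter.mp hω').2
      have hupd : Function.update ω e false = ω' := by
        funext e'
        by_cases he : e' = e
        · subst he; simp [hω'e]
        · rw [Function.update_of_ne he, ← heq, Function.update_of_ne he]
      exact hpv.2 (by rw [hupd]; exact hω'Γ)
    calc ∑ ω ∈ G.filter (fun ω => Pivotal Γ e ω), W ω
        ≤ ∑ ω ∈ G.filter (fun ω => Pivotal Γ e ω), A e ω :=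
          Finset.sum_le_sum fun ω _ => hWA e ω
      _ ≤ ∑ ω ∈ Gt \ I, A e ω :=
          Finset.sum_le_sum_of_subset_of_nonneg hPsub (fun ω _ _ => hAnn e ω)
      _ = ∑ ω ∈ Gt, A e ω - ∑ ω ∈ I, A e ω := Finset.sum_sdiff_eq_sub hIGt
      _ = ∑ ω ∈ Gt, A e ω - ∑ ω ∈ Gf, A e ω := by rw [hIsum]
      _ = ∑ ω ∈ G, A e ω * wsgn (ω e) := hsplit.symm
  have hcount : ∀ ω ∈ G,
      (Fintype.card V : ℝ) ≤ 2 * ((univ.filter fun e => Pivotal Γ e ω).card : ℝ) := by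
    intro ω hω
    have hωΓ : ω ∈ Γ := (Finset.mem_filter.mp hω).2
    choose g hg1 hg2 using hpiv ω hωΓ
    have h1 : Fintype.card V ≤ 2 * (univ.image g).card := by
      rw [← Finset.card_univ]
      refine Finset.card_le_mul_card_image univ 2 fun a ha => ?_
      refine le_trans (Finset.card_le_card ?_) (hdeg a)
      intro v hv
      have hva : g v = a := (Finset.mem_filter.mp hv).2
      exact Finset.mem_filter.mpr ⟨Finset.mem_univ _, hva ▸ hg1 v⟩
    have h2 : (univ.image g).card ≤ (univ.filter fun e => Pivotal Γ e ω).card := by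
      refine Finset.card_le_card ?_
      intro e he
      obtain ⟨v, _, rfl⟩ := Finset.mem_image.mp he
      exact Finset.mem_filter.mpr ⟨Finset.mem_univ _, hg2 v⟩
    calc (Fintype.card V : ℝ) ≤ 2 * ((univ.image g).card : ℝ) := by exact_mod_cast h1
      _ ≤ 2 * ((univ.filter fun e => Pivotal Γ e ω).card : ℝ) :=
          mul_le_mul_of_nonneg_left (by exact_mod_cast h2) (by norm_num)
  have hswap : ∑ e : ι, ∑ ω ∈ G.filter (fun ω => Pivotal Γ e ω), W ω
      = ∑ ω ∈ G, ((univ.filter fun e => Pivotal Γ e ω).card : ℝ) * W ω := by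
    simp_rw [Finset.sum_filter]
    rw [Finset.sum_comm]
    refine Finset.sum_congr rfl fun ω _ => ?_
    rw [← Finset.sum_filter, Finset.sum_const, nsmul_eq_mul]
  calc (Fintype.card V : ℝ) * ∑ ω ∈ G, W ω
      = ∑ ω ∈ G, (Fintype.card V : ℝ) * W ω := Finset.mul_sum _ _ _
    _ ≤ ∑ ω ∈ G, 2 * ((univ.filter fun e => Pivotal Γ e ω).card : ℝ) * W ω :=
        Finset.sum_le_sum fun ω hω => mul_le_mul_of_nonneg_right (hcount ω hω) (hWnn ω)
    _ = 2 * ∑ ω ∈ G, ((univ.filter fun e => Pivotal Γ e ω).card : ℝ) * W ω := by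
        rw [Finset.mul_sum]; refine Finset.sum_congr rfl fun ω _ => by ring
    _ = 2 * ∑ e : ι, ∑ ω ∈ G.filter (fun ω => Pivotal Γ e ω), W ω := by rw [hswap]
    _ ≤ 2 * ∑ e : ι, ∑ ω ∈ G, A e ω * wsgn (ω e) := by
        have := Finset.sum_le_sum fun e (_ : e ∈ (univ : Finset ι)) => step1 e
        linarith
    _ = 2 * ∑ ω ∈ G, ∑ e, A e ω * wsgn (ω e) := by rw [Finset.sum_comm]

/-- Russo-formula lower bound (Section 4).  Let `Γ` be an increasing event on the
configurations of a finite edge set `ι`, and `inc v` the (at most 4) edges incident to a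
vertex `v` of a vertex set `V` with at least `n²` vertices, each edge incident to at most
two vertices.  If on `Γ` every vertex has a pivotal incident edge, then for
`p ∈ [ε, 1-ε]` the derivative of `p ↦ P_p(Γ)` is at least `C(ε) n² P_p(Γ)`, and
consequently `P_p(Γ) ≥ P_{p_c}(Γ) · exp (C(ε) n² (p - p_c))` for `ε ≤ p_c ≤ p ≤ 1-ε`,
where `C(ε) > 0` depends only on `ε`. -/
theorem russo_lower_bound (ε : ℝ) (hε0 : 0 < ε) (hε : ε < 1/2) :
    ∃ C : ℝ, 0 < C ∧
      ∀ (n : ℕ) (ι V : Type) [Fintype ι] [DecidableEq ι] [Fintype V]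
        (inc : V → Finset ι) (Γ : Set (ι → Bool)),
        n ^ 2 ≤ Fintype.card V →
        (∀ v, (inc v).card ≤ 4) →
        (∀ e : ι, (Finset.univ.filter fun v => e ∈ inc v).card ≤ 2) →
        (∀ ω ω' : ι → Bool, (∀ e, ω e = true → ω' e = true) → ω ∈ Γ → ω' ∈ Γ) →
        (∀ ω ∈ Γ, ∀ v : V, ∃ e ∈ inc v, Pivotal Γ e ω) →
        ((∀ p ∈ Set.Icc ε (1 - ε), ∀ d : ℝ,
            HasDerivAt (fun q => ((bernoulliConfig ι q) Γ).toReal) d p →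
            C * n ^ 2 * ((bernoulliConfig ι p) Γ).toReal ≤ d) ∧
          (∀ pc p : ℝ, ε ≤ pc → pc ≤ p → p ≤ 1 - ε →
            ((bernoulliConfig ι pc) Γ).toReal * Real.exp (C * n ^ 2 * (p - pc)) ≤
              ((bernoulliConfig ι p) Γ).toReal)) := by
  refine ⟨1/2, by norm_num, ?_⟩
  intro n ι V _ _ _ inc Γ hcard _ hdeg hmono hpiv
  classical
  set G := (univ.filter (· ∈ Γ) : Finset (ι → Bool)) with hG
  set F : ℝ → ℝ := fun q => ∑ ω ∈ G, ∏ e, wgt q (ω e) with hF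
  set D : ℝ → ℝ :=
    fun q => ∑ ω ∈ G, ∑ e, (∏ e' ∈ univ.erase e, wgt q (ω e')) * wsgn (ω e) with hD
  have hFd : ∀ q, HasDerivAt F (D q) q := fun q => hasDerivAt_F G q
  have hFnn : ∀ q : ℝ, 0 ≤ q → q ≤ 1 → 0 ≤ F q := fun q h0 h1 =>
    Finset.sum_nonneg fun ω _ => Finset.prod_nonneg fun e _ => wgt_nonneg h0 h1 _
  have hkey : ∀ q : ℝ, 0 ≤ q → q ≤ 1 → 1/2 * (n : ℝ)^2 * F q ≤ D q := by
    intro q h0 h1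
    have h := key_ineq inc Γ hdeg hmono hpiv h0 h1
    have hc : ((n : ℝ))^2 ≤ (Fintype.card V : ℝ) := by exact_mod_cast hcard
    have h2 : ((n : ℝ))^2 * F q ≤ (Fintype.card V : ℝ) * F q :=
      mul_le_mul_of_nonneg_right hc (hFnn q h0 h1)
    rw [hF]; rw [hD]
    linarith [h, h2]
  have hagree : ∀ q : ℝ, 0 ≤ q → q ≤ 1 → ((bernoulliConfig ι q) Γ).toReal = F q :=
    fun q h0 h1 => bernoulliConfig_toReal h0 h1 Γ
  have hεle : ε ≤ 1 - ε := by linarith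
  constructor
  · intro p hp d hd
    have hp0 : 0 < p := lt_of_lt_of_le hε0 hp.1
    have hp1 : p < 1 := lt_of_le_of_lt hp.2 (by linarith)
    have hev : (fun q => ((bernoulliConfig ι q) Γ).toReal) =ᶠ[nhds p] F := by
      filter_upwards [Ioo_mem_nhds hp0 hp1] with q hq
      exact hagree q hq.1.le hq.2.le
    have hd' : HasDerivAt (fun q => ((bernoulliConfig ι q) Γ).toReal) (D p) p :=
      (hFd p).congr_of_eventuallyEq hev
    rw [hd.unique hd', hagree p hp0.le hp1.le]
    exact hkey p hp0.le hp1.le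
  · intro pc p hpc1 hpcp hp1e
    set c : ℝ := 1/2 * (n : ℝ)^2 with hc
    have hexp : ∀ q : ℝ, HasDerivAt (fun x => Real.exp (-(c*x))) (Real.exp (-(c*q)) * -c) q :=
      fun q => by simpa using (((hasDerivAt_id q).const_mul c).neg).exp
    have hH : ∀ q : ℝ, HasDerivAt (fun x => F x * Real.exp (-(c*x)))
        (D q * Real.exp (-(c*q)) + F q * (Real.exp (-(c*q)) * -c)) q :=
      fun q => (hFd q).mul (hexp q)
    have hmonoH : MonotoneOn (fun x => F x * Real.exp (-(c*x))) (Set.Icc ε (1-ε)) := by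
      refine monotoneOn_of_deriv_nonneg (convex_Icc _ _) ?_ ?_ ?_
      · exact Continuous.continuousOn
          (continuous_iff_continuousAt.mpr fun q => (hH q).continuousAt)
      · exact fun q _ => (hH q).differentiableAt.differentiableWithinAt
      · intro q hq
        rw [interior_Icc] at hq
        rw [(hH q).deriv]
        have h0 : (0:ℝ) ≤ q := le_trans hε0.le hq.1.le
        have h1 : q ≤ 1 := by have := hq.2; linarith
        have hk := hkey q h0 h1
        have he := Real.exp_pos (-(c*q))
        nlinarith
    have hple : p ≤ 1 := by linarith
    have hpc0 : 0 ≤ pc := le_trans hε0.le hpc1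
    have hle := hmonoH ⟨hpc1, le_trans hpcp hp1e⟩ ⟨le_trans hpc1 hpcp, hp1e⟩ hpcp
    have h1 : F pc * Real.exp (-(c*pc)) * Real.exp (c*p)
        ≤ F p * Real.exp (-(c*p)) * Real.exp (c*p) :=
      mul_le_mul_of_nonneg_right hle (Real.exp_pos _).le
    have h2 : F pc * Real.exp (-(c*pc)) * Real.exp (c*p) = F pc * Real.exp (c*(p-pc)) := by
      rw [mul_assoc, ← Real.exp_add, show -(c*pc)+c*p = c*(p-pc) by ring]
    have h3 : F p * Real.exp (-(c*p)) * Real.exp (c*p) = F p := by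
      rw [mul_assoc, ← Real.exp_add]; simp
    rw [hagree pc hpc0 (by linarith), hagree p (by linarith) hple]
    calc F pc * Real.exp (1/2 * (n:ℝ)^2 * (p - pc)) = F pc * Real.exp (c*(p-pc)) := by rw [hc]
      _ ≤ F p := by linarith
end

section
/- (Disconnecting edges and outlets.) Let G = (𝒢, ℰ) be an infinite connected subgraph of (ℤ², 𝔼²) containing the origin. Call e ∈ ℰ a disconnecting edge for G if (𝒢, ℰ \ {e}) has a finite connected component containing the origin. Then in the invasion percolation cluster 𝒮, every outlet ê_k is a disconnecting edge for 𝒮: removing ê_k from 𝒮 leaves the union of the first k ponds as a finite component containing the origin. -/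
open Classical

/-- An edge of the square lattice `ℤ²`, represented in canonical orientation: the second
endpoint is the first shifted by `(1,0)` or `(0,1)`. -/
def IsLatticeEdge (e : (ℤ × ℤ) × (ℤ × ℤ)) : Prop :=
  e.2 = (e.1.1 + 1, e.1.2) ∨ e.2 = (e.1.1, e.1.2 + 1)

/-- The outer edge boundary of the current invaded region `W = (V, E)`: lattice edges not
in `E` with at least one endpoint in `V`. -/
def invBoundary (W : Finset (ℤ × ℤ) × Finset ((ℤ × ℤ) × (ℤ × ℤ))) :
    Set ((ℤ × ℤ) × (ℤ × ℤ)) :=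
  {e | IsLatticeEdge e ∧ e ∉ W.2 ∧ (e.1 ∈ W.1 ∨ e.2 ∈ W.1)}

/-- One step of the invasion: add the boundary edge of (strictly) minimal weight, if it
exists. -/
noncomputable def invStep (τ : (ℤ × ℤ) × (ℤ × ℤ) → ℝ)
    (W : Finset (ℤ × ℤ) × Finset ((ℤ × ℤ) × (ℤ × ℤ))) :
    Finset (ℤ × ℤ) × Finset ((ℤ × ℤ) × (ℤ × ℤ)) :=
  if h : ∃ e, e ∈ invBoundary W ∧ ∀ e' ∈ invBoundary W, e' ≠ e → τ e < τ e' then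
    (insert h.choose.1 (insert h.choose.2 W.1), insert h.choose W.2)
  else W

/-- The invaded region `G_n` after `n` steps, starting from the origin. -/
noncomputable def invaded (τ : (ℤ × ℤ) × (ℤ × ℤ) → ℝ) (n : ℕ) :
    Finset (ℤ × ℤ) × Finset ((ℤ × ℤ) × (ℤ × ℤ)) :=
  (invStep τ)^[n] ({((0 : ℤ), (0 : ℤ))}, ∅)

/-- The edge set of the invasion percolation cluster `𝒮`. -/
noncomputable def invadedEdges (τ : (ℤ × ℤ) × (ℤ × ℤ) → ℝ) : Set ((ℤ × ℤ) × (ℤ × ℤ)) :=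
  ⋃ n, ↑(invaded τ n).2

/-- The set of sites reachable from the origin in `𝒮` after removing the edge `eHat`. -/
def reachAvoiding (τ : (ℤ × ℤ) × (ℤ × ℤ) → ℝ) (eHat : (ℤ × ℤ) × (ℤ × ℤ)) : Set (ℤ × ℤ) :=
  {x | Relation.ReflTransGen
    (fun a b => ((a, b) ∈ invadedEdges τ ∧ (a, b) ≠ eHat) ∨
      ((b, a) ∈ invadedEdges τ ∧ (b, a) ≠ eHat))
    ((0 : ℤ), (0 : ℤ)) x}

lemma invStep_fst_subset (τ : (ℤ × ℤ) × (ℤ × ℤ) → ℝ)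
    (W : Finset (ℤ × ℤ) × Finset ((ℤ × ℤ) × (ℤ × ℤ))) : W.1 ⊆ (invStep τ W).1 := by
  unfold invStep
  split
  · exact fun x hx => Finset.mem_insert_of_mem (Finset.mem_insert_of_mem hx)
  · exact fun x hx => hx

lemma invStep_snd_subset (τ : (ℤ × ℤ) × (ℤ × ℤ) → ℝ)
    (W : Finset (ℤ × ℤ) × Finset ((ℤ × ℤ) × (ℤ × ℤ))) : W.2 ⊆ (invStep τ W).2 := by
  unfold invStep
  split
  · exact fun x hx => Finset.mem_insert_of_mem hx
  · exact fun x hx => hx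

lemma invaded_fst_mono (τ : (ℤ × ℤ) × (ℤ × ℤ) → ℝ) {m n : ℕ} (h : m ≤ n) :
    (invaded τ m).1 ⊆ (invaded τ n).1 := by
  induction n, h using Nat.le_induction with
  | base => exact fun x hx => hx
  | succ n hmn ih =>
      intro x hx
      rw [invaded, Function.iterate_succ_apply']
      exact invStep_fst_subset τ _ (ih hx)

lemma invaded_snd_mono (τ : (ℤ × ℤ) × (ℤ × ℤ) → ℝ) {m n : ℕ} (h : m ≤ n) :
    (invaded τ m).2 ⊆ (invaded τ n).2 := by
  induction n, h using Nat.le_induction with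
  | base => exact fun x hx => hx
  | succ n hmn ih =>
      intro x hx
      rw [invaded, Function.iterate_succ_apply']
      exact invStep_snd_subset τ _ (ih hx)

lemma invaded_succ_cases (τ : (ℤ × ℤ) × (ℤ × ℤ) → ℝ) (n : ℕ) :
    invaded τ (n + 1) = invaded τ n ∨
    ∃ e, e ∈ invBoundary (invaded τ n) ∧
      (∀ e' ∈ invBoundary (invaded τ n), e' ≠ e → τ e < τ e') ∧
      invaded τ (n + 1) =
        (insert e.1 (insert e.2 (invaded τ n).1), insert e (invaded τ n).2) := by
  have hstep : invaded τ (n + 1) = invStep τ (invaded τ n) := by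
    rw [invaded, invaded, Function.iterate_succ_apply']
  rw [hstep]
  unfold invStep
  split
  · rename_i h
    exact Or.inr ⟨h.choose, h.choose_spec.1, h.choose_spec.2, rfl⟩
  · exact Or.inl rfl

lemma invaded_edge_mem (τ : (ℤ × ℤ) × (ℤ × ℤ) → ℝ) (n : ℕ) :
    ∀ e ∈ (invaded τ n).2, IsLatticeEdge e ∧ e.1 ∈ (invaded τ n).1 ∧ e.2 ∈ (invaded τ n).1 := by
  induction n with
  | zero => intro e he; simp [invaded] at he
  | succ n ih =>
      intro e he
      rcases invaded_succ_cases τ n with heq | ⟨e0, hbd, _, heq⟩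
      · rw [heq] at he ⊢
        exact ih e he
      · rw [heq] at he ⊢
        simp only at he ⊢
        rcases Finset.mem_insert.1 he with rfl | he'
        · exact ⟨hbd.1, Finset.mem_insert_self _ _,
            Finset.mem_insert_of_mem (Finset.mem_insert_self _ _)⟩
        · obtain ⟨h1, h2, h3⟩ := ih e he'
          exact ⟨h1, Finset.mem_insert_of_mem (Finset.mem_insert_of_mem h2),
            Finset.mem_insert_of_mem (Finset.mem_insert_of_mem h3)⟩

lemma new_edge_spec (τ : (ℤ × ℤ) × (ℤ × ℤ) → ℝ) (n : ℕ) (e : (ℤ × ℤ) × (ℤ × ℤ))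
    (h1 : e ∈ (invaded τ (n + 1)).2) (h2 : e ∉ (invaded τ n).2) :
    (invaded τ (n + 1)).2 = insert e (invaded τ n).2 ∧
    e ∈ invBoundary (invaded τ n) ∧
    ∀ e' ∈ invBoundary (invaded τ n), e' ≠ e → τ e < τ e' := by
  rcases invaded_succ_cases τ n with heq | ⟨e0, hbd, hmin, heq⟩
  · rw [heq] at h1; exact absurd h1 h2
  · rw [heq] at h1
    simp only at h1
    rcases Finset.mem_insert.1 h1 with rfl | he'
    · exact ⟨by rw [heq], hbd, hmin⟩
    · exact absurd he' h2

lemma reach_invaded (τ : (ℤ × ℤ) × (ℤ × ℤ) → ℝ) (n : ℕ) :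
    ∀ x ∈ (invaded τ n).1,
      Relation.ReflTransGen
        (fun a b => (a, b) ∈ (invaded τ n).2 ∨ (b, a) ∈ (invaded τ n).2)
        ((0 : ℤ), (0 : ℤ)) x := by
  induction n with
  | zero =>
      intro x hx
      simp [invaded] at hx
      subst hx
      exact Relation.ReflTransGen.refl
  | succ n ih =>
      intro x hx
      have hmono : ∀ a b : ℤ × ℤ,
          ((a, b) ∈ (invaded τ n).2 ∨ (b, a) ∈ (invaded τ n).2) →
          ((a, b) ∈ (invaded τ (n + 1)).2 ∨ (b, a) ∈ (invaded τ (n + 1)).2) := by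
        intro a b hab
        rcases hab with h | h
        · exact Or.inl (invaded_snd_mono τ (Nat.le_succ n) h)
        · exact Or.inr (invaded_snd_mono τ (Nat.le_succ n) h)
      have ih' : ∀ y ∈ (invaded τ n).1,
          Relation.ReflTransGen
            (fun a b => (a, b) ∈ (invaded τ (n + 1)).2 ∨ (b, a) ∈ (invaded τ (n + 1)).2)
            ((0 : ℤ), (0 : ℤ)) y :=
        fun y hy => Relation.ReflTransGen.mono (fun a b => hmono a b) _ _ (ih y hy)
      rcases invaded_succ_cases τ n with heq | ⟨e0, hbd, _, heq⟩
      · rw [heq] at hx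
        exact ih' x hx
      · have hmem : e0 ∈ (invaded τ (n + 1)).2 := by
          rw [heq]; exact Finset.mem_insert_self _ _
        rw [heq] at hx
        simp only at hx
        rcases Finset.mem_insert.1 hx with rfl | hx'
        · rcases hbd.2.2 with h1 | h2
          · exact ih' _ h1
          · refine (ih' _ h2).tail ?_
            right
            rwa [Prod.mk.eta]
        · rcases Finset.mem_insert.1 hx' with rfl | hx''
          · rcases hbd.2.2 with h1 | h2
            · refine (ih' _ h1).tail ?_
              left
              rwa [Prod.mk.eta]
            · exact ih' _ h2
          · exact ih' _ hx''

/-- Every outlet of the invasion is a disconnecting edge for the invasion percolation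
cluster `𝒮`: if `eHat` is the edge invaded at step `i+1` and its weight exceeds the weight of
every edge invaded afterwards (as holds a.s. for the outlets `eHat_k`), then removing `eHat`
from `𝒮` leaves exactly the invaded region `G_i` — the union of the first `k` ponds — as a
finite component containing the origin. -/
theorem outlet_is_disconnecting
    (τ : (ℤ × ℤ) × (ℤ × ℤ) → ℝ) (hinj : Function.Injective τ)
    (i : ℕ) (eHat : (ℤ × ℤ) × (ℤ × ℤ))
    (hnew : eHat ∈ (invaded τ (i + 1)).2 ∧ eHat ∉ (invaded τ i).2)
    (hmax : ∀ n : ℕ, ∀ e ∈ (invaded τ n).2, e ∉ (invaded τ (i + 1)).2 → τ e < τ eHat) :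
    reachAvoiding τ eHat = ↑(invaded τ i).1 ∧
    (reachAvoiding τ eHat).Finite ∧ ((0 : ℤ), (0 : ℤ)) ∈ reachAvoiding τ eHat := by
  classical
  have horigin : ((0 : ℤ), (0 : ℤ)) ∈ reachAvoiding τ eHat := Relation.ReflTransGen.refl
  obtain ⟨hins, hbd, hmin⟩ := new_edge_spec τ i eHat hnew.1 hnew.2
  have key : ∀ e : (ℤ × ℤ) × (ℤ × ℤ), e ∈ invadedEdges τ → e ≠ eHat →
      (e.1 ∈ (invaded τ i).1 ∨ e.2 ∈ (invaded τ i).1) → e ∈ (invaded τ i).2 := by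
    intro e he hne htouch
    by_contra hnotin
    obtain ⟨n, hn⟩ : ∃ n, e ∈ (invaded τ n).2 := by
      simpa [invadedEdges] using he
    have hlat : IsLatticeEdge e := (invaded_edge_mem τ n e hn).1
    have hbde : e ∈ invBoundary (invaded τ i) := ⟨hlat, hnotin, htouch⟩
    have h1 : τ eHat < τ e := hmin e hbde hne
    have hnot1 : e ∉ (invaded τ (i + 1)).2 := by
      rw [hins]
      intro hmem
      rcases Finset.mem_insert.1 hmem with rfl | hmem'
      · exact hne rfl
      · exact hnotin hmem'
    have h2 : τ e < τ eHat := hmax n e hn hnot1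
    exact absurd h1 (not_lt.2 h2.le)
  have heq : reachAvoiding τ eHat = ↑(invaded τ i).1 := by
    ext x
    constructor
    · intro hx
      simp only [Finset.coe_sort_coe, Finset.mem_coe]
      induction hx with
      | refl =>
          exact invaded_fst_mono τ (Nat.zero_le i) (by simp [invaded])
      | tail hab hbc ih =>
          rename_i b c
          rcases hbc with ⟨hmem, hne⟩ | ⟨hmem, hne⟩
          · have := key (b, c) hmem hne (Or.inl ih)
            exact (invaded_edge_mem τ i _ this).2.2
          · have := key (c, b) hmem hne (Or.inr ih)
            exact (invaded_edge_mem τ i _ this).2.1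
    · intro hx
      have hx' : x ∈ (invaded τ i).1 := hx
      refine Relation.ReflTransGen.mono ?_ _ _ (reach_invaded τ i x hx')
      intro a b hab
      have hconv : ∀ f : (ℤ × ℤ) × (ℤ × ℤ), f ∈ (invaded τ i).2 →
          f ∈ invadedEdges τ ∧ f ≠ eHat := by
        intro f hf
        refine ⟨Set.mem_iUnion.2 ⟨i, hf⟩, ?_⟩
        rintro rfl
        exact hnew.2 hf
      rcases hab with h | h
      · exact Or.inl (hconv _ h)
      · exact Or.inr (hconv _ h)
  refine ⟨heq, ?_, horigin⟩
  rw [heq]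
  exact (invaded τ i).1.finite_toSet
end
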